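/- arXiv:2309.12758 — 3 statements merged into one kernel-verified Lean document; each statement's English description precedes it below -/
import Mathlib

section
/- Let Q, R be symmetric positive definite matrices and let P be a symmetric positive definite solution of the discrete algebraic Riccati equation P = AᵀPA − AᵀPB(R + BᵀPB)⁻¹BᵀPA + Q with associated gain K_f = −(R + BᵀPB)⁻¹BᵀPA. Then for every matrix G and every positive semidefinite Σ, the pair (P, K_f) minimizes tr(GᵀP̃GΣ) over all pairs (P̃, K) with P̃ ≻ 0 satisfying the Lyapunov-type inequality P̃ − Q − KᵀRK ⪰ (A+BK)ᵀP̃(A+BK). That is, any feasible (P̃, K) satisfies tr(GᵀP̃GΣ) ≥ tr(GᵀPGΣ). -/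
/-!
With `L = A + BK` and `Δ = P̃ - P`, adding the feasibility inequality for `(P̃, K)` to the
optimality inequality of `P` at the same gain `K` gives the Stein inequality `LᵀΔL ⪯ Δ`.
Feasibility also says `LᵀP̃L + Q ⪯ P̃`, and since `Q ≻ 0` dominates a multiple of `P̃` this makes
`L` a strict contraction for `P̃`: `LᵀP̃L ⪯ r P̃` with `r < 1`. Starting from `-t P̃ ⪯ Δ`,
conjugating by `L` gives `-t rᵏ P̃ ⪯ Δ` for all `k`, hence `Δ ⪰ 0`, and then
`tr(GᵀΔGΣ) ≥ 0` because `Σ ⪰ 0`.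
-/

open Matrix Filter Topology
open scoped MatrixOrder ComplexOrder

namespace Matrix

variable {n : Type*} [Fintype n]

lemma PosDef.exists_le_smul [DecidableEq n] {M X : Matrix n n ℝ} (hM : M.PosDef)
    (hX : X.IsHermitian) : ∃ t : ℝ, 0 ≤ t ∧ X ≤ t • M := by
  cases isEmpty_or_nonempty n
  · exact ⟨0, le_rfl, (Subsingleton.elim _ _).le⟩
  obtain ⟨c, hc⟩ := (finite_real_spectrum (A := X)).bddAbove
  obtain ⟨ε, hε, hεM⟩ := (CFC.exists_pos_algebraMap_le_iff hM.isHermitian.isSelfAdjoint).2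
    fun _ hx => hM.isStrictlyPositive.spectrum_pos hx
  have hXc : X ≤ algebraMap ℝ _ (max c 0) :=
    le_algebraMap_of_spectrum_le (fun x hx => (hc hx).trans (le_max_left c 0)) hX.isSelfAdjoint
  refine ⟨max c 0 / ε, by positivity, hXc.trans ?_⟩
  calc algebraMap ℝ _ (max c 0) = (max c 0 / ε) • algebraMap ℝ (Matrix n n ℝ) ε := by
        rw [Algebra.algebraMap_eq_smul_one, Algebra.algebraMap_eq_smul_one, smul_smul,
          div_mul_cancel₀ _ hε.ne']
    _ ≤ (max c 0 / ε) • M := smul_le_smul_of_nonneg_left hεM (by positivity)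

omit [Fintype n] in
lemma PosSemidef.smul_le_smul_right {P : Matrix n n ℝ} (hP : P.PosSemidef) {a b : ℝ}
    (hab : a ≤ b) : a • P ≤ b • P := by
  rw [le_iff, ← sub_smul]
  exact hP.smul (sub_nonneg.2 hab)

lemma transpose_mul_mul_le_transpose_mul_mul {X Y : Matrix n n ℝ} (h : X ≤ Y)
    (C : Matrix n n ℝ) : Cᵀ * X * C ≤ Cᵀ * Y * C := by
  simpa [star_eq_conjTranspose, conjTranspose_eq_transpose_of_trivial] using
    star_left_conjugate_le_conjugate h C

lemma nonneg_of_forall_neg_smul_le {Δ P : Matrix n n ℝ} (hΔ : Δ.IsHermitian)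
    (h : ∀ ε : ℝ, 0 < ε → -(ε • P) ≤ Δ) : 0 ≤ Δ := by
  refine (PosSemidef.of_dotProduct_mulVec_nonneg hΔ fun y => ?_).nonneg
  have key : ∀ ε : ℝ, 0 < ε → 0 ≤ y ⬝ᵥ Δ *ᵥ y + ε * (y ⬝ᵥ P *ᵥ y) := fun ε hε => by
    simpa [le_iff, add_mulVec, smul_mulVec, dotProduct_add, dotProduct_smul] using
      (h ε hε).dotProduct_mulVec_nonneg y
  have hlim : Tendsto (fun ε : ℝ => y ⬝ᵥ Δ *ᵥ y + ε * (y ⬝ᵥ P *ᵥ y)) (𝓝[>] 0)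
      (𝓝 (y ⬝ᵥ Δ *ᵥ y)) :=
    tendsto_nhdsWithin_of_tendsto_nhds (Continuous.tendsto' (by fun_prop) _ _ (by simp))
  simpa using ge_of_tendsto hlim (eventually_nhdsWithin_of_forall key)

lemma exists_contraction_of_lyapunov [DecidableEq n] {P Q L : Matrix n n ℝ} (hP : P.PosDef)
    (hQ : Q.PosDef) (h : Lᵀ * P * L + Q ≤ P) :
    ∃ r : ℝ, 0 ≤ r ∧ r < 1 ∧ Lᵀ * P * L ≤ r • P := by
  obtain ⟨s, hs, hPs⟩ := hQ.exists_le_smul hP.isHermitian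
  refine ⟨s / (s + 1), by positivity, (div_lt_one (by linarith)).2 (by linarith), ?_⟩
  have hQP : (s + 1)⁻¹ • P ≤ Q :=
    calc (s + 1)⁻¹ • P ≤ (s + 1)⁻¹ • (s • Q) := smul_le_smul_of_nonneg_left hPs (by positivity)
      _ ≤ (s + 1)⁻¹ • ((s + 1) • Q) :=
          smul_le_smul_of_nonneg_left (hQ.posSemidef.smul_le_smul_right (by linarith))
            (by positivity)
      _ = Q := by rw [smul_smul, inv_mul_cancel₀ (by linarith), one_smul]
  calc Lᵀ * P * L ≤ P - Q := le_sub_iff_add_le.2 h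
    _ ≤ P - (s + 1)⁻¹ • P := sub_le_sub_left hQP P
    _ = (s / (s + 1)) • P := by
        nth_rewrite 1 [← one_smul ℝ P]
        rw [← sub_smul]
        congr 1
        field_simp
        ring

lemma nonneg_of_transpose_mul_mul_le_of_contraction [DecidableEq n] {Δ P L : Matrix n n ℝ}
    {r : ℝ} (hΔ : Δ.IsHermitian) (hP : P.PosDef) (hr0 : 0 ≤ r) (hr1 : r < 1)
    (hPL : Lᵀ * P * L ≤ r • P) (hΔL : Lᵀ * Δ * L ≤ Δ) : 0 ≤ Δ := by
  obtain ⟨t, ht, hΔt⟩ := hP.exists_le_smul hΔ.neg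
  have hiter : ∀ k : ℕ, -((t * r ^ k) • P) ≤ Δ := by
    intro k
    induction k with
    | zero => simpa using neg_le.1 hΔt
    | succ k ih =>
      calc -((t * r ^ (k + 1)) • P) = -(t * r ^ k) • (r • P) := by
            rw [smul_smul, ← neg_smul]
            ring_nf
        _ ≤ -(t * r ^ k) • (Lᵀ * P * L) :=
            smul_le_smul_of_nonpos_left hPL (neg_nonpos.2 (mul_nonneg ht (pow_nonneg hr0 k)))
        _ = Lᵀ * -((t * r ^ k) • P) * L := by
            rw [neg_smul, Matrix.mul_neg, Matrix.neg_mul, Matrix.mul_smul, Matrix.smul_mul]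
        _ ≤ Lᵀ * Δ * L := transpose_mul_mul_le_transpose_mul_mul ih L
        _ ≤ Δ := hΔL
  refine nonneg_of_forall_neg_smul_le (P := P) hΔ fun ε hε => ?_
  obtain ⟨k, hk⟩ := exists_pow_lt_of_lt_one (div_pos hε (by linarith : (0 : ℝ) < t + 1)) hr1
  have htk : t * r ^ k ≤ ε := by
    rw [lt_div_iff₀ (by linarith)] at hk
    nlinarith [pow_nonneg hr0 k]
  exact (neg_le_neg (hP.posSemidef.smul_le_smul_right htk)).trans (hiter k)

lemma PosSemidef.trace_mul_nonneg {𝕜 : Type*} [RCLike 𝕜] {X Y : Matrix n n 𝕜}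
    (hX : X.PosSemidef) (hY : Y.PosSemidef) : 0 ≤ (X * Y).trace := by
  classical
  obtain ⟨C, rfl⟩ : ∃ C : Matrix n n 𝕜, Y = Cᴴ * C :=
    CStarAlgebra.nonneg_iff_eq_star_mul_self.mp hY.nonneg
  rw [← Matrix.mul_assoc, trace_mul_comm]
  simpa only [Matrix.mul_assoc] using (hX.mul_mul_conjTranspose_same C).trace_nonneg

end Matrix

theorem dare_solution_minimizes_trace_general
    {n m q : ℕ}
    (A P Q : Matrix (Fin n) (Fin n) ℝ)
    (B : Matrix (Fin n) (Fin m) ℝ)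
    (R : Matrix (Fin m) (Fin m) ℝ)
    (hQ : Q.PosDef) (hR : R.PosDef) (hP : P.PosDef)
    (hOpt : ∀ K : Matrix (Fin m) (Fin n) ℝ,
      ((A + B * K)ᵀ * P * (A + B * K) - (P - Q - Kᵀ * R * K)).PosSemidef)
    (G : Matrix (Fin n) (Fin q) ℝ)
    (Sg : Matrix (Fin q) (Fin q) ℝ) (hSg : Sg.PosSemidef)
    (Pt : Matrix (Fin n) (Fin n) ℝ) (K : Matrix (Fin m) (Fin n) ℝ)
    (hPt : Pt.PosDef)
    (hfeas : (Pt - Q - Kᵀ * R * K - (A + B * K)ᵀ * Pt * (A + B * K)).PosSemidef) :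
    (Gᵀ * P * G * Sg).trace ≤ (Gᵀ * Pt * G * Sg).trace := by
  set L := A + B * K
  have hRK : 0 ≤ Kᵀ * R * K := by
    simpa [conjTranspose_eq_transpose_of_trivial] using
      (hR.posSemidef.conjTranspose_mul_mul_same K).nonneg
  have hLyap : Lᵀ * Pt * L + Q ≤ Pt := by
    refine (le_add_of_nonneg_right hRK).trans (le_iff.2 ?_)
    rw [show Pt - (Lᵀ * Pt * L + Q + Kᵀ * R * K) = Pt - Q - Kᵀ * R * K - Lᵀ * Pt * L by abel]
    exact hfeas
  have hStein : Lᵀ * (Pt - P) * L ≤ Pt - P := by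
    rw [le_iff, show Pt - P - Lᵀ * (Pt - P) * L = (Pt - Q - Kᵀ * R * K - Lᵀ * Pt * L) +
      (Lᵀ * P * L - (P - Q - Kᵀ * R * K)) by simp only [Matrix.mul_sub, Matrix.sub_mul]; abel]
    exact hfeas.add (hOpt K)
  obtain ⟨r, hr0, hr1, hr⟩ := exists_contraction_of_lyapunov hPt hQ hLyap
  have hΔ : 0 ≤ Pt - P := nonneg_of_transpose_mul_mul_le_of_contraction
    (hPt.isHermitian.sub hP.isHermitian) hPt hr0 hr1 hr hStein
  have htrace := ((nonneg_iff_posSemidef.1 hΔ).conjTranspose_mul_mul_same G).trace_mul_nonneg hSg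
  rw [conjTranspose_eq_transpose_of_trivial, Matrix.mul_sub, Matrix.sub_mul, Matrix.sub_mul,
    trace_sub] at htrace
  linarith

/-- The DARE solution `P` with gain `K_f = −(R + BᵀPB)⁻¹BᵀPA` minimizes `tr(GᵀP̃GΣ)` over
all pairs `(P̃, K)` with `P̃ ≻ 0` satisfying the Lyapunov-type inequality
`P̃ − Q − KᵀRK ⪰ (A+BK)ᵀP̃(A+BK)`: any feasible `(P̃, K)` satisfies
`tr(GᵀP̃GΣ) ≥ tr(GᵀPGΣ)` for every `G` and every `Σ ⪰ 0`. -/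
theorem dare_solution_minimizes_trace
    {n m q : ℕ}
    (A P Q : Matrix (Fin n) (Fin n) ℝ)
    (B : Matrix (Fin n) (Fin m) ℝ)
    (R : Matrix (Fin m) (Fin m) ℝ)
    (Kf : Matrix (Fin m) (Fin n) ℝ)
    (hQ : Q.PosDef) (hR : R.PosDef) (hP : P.PosDef)
    (hDARE : P = Aᵀ * P * A - Aᵀ * P * B * (R + Bᵀ * P * B)⁻¹ * (Bᵀ * P * A) + Q)
    (hKf : Kf = -((R + Bᵀ * P * B)⁻¹ * (Bᵀ * P * A)))
    (hOpt : ∀ K : Matrix (Fin m) (Fin n) ℝ,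
      ((A + B * K)ᵀ * P * (A + B * K) - (P - Q - Kᵀ * R * K)).PosSemidef)
    (G : Matrix (Fin n) (Fin q) ℝ)
    (Sg : Matrix (Fin q) (Fin q) ℝ) (hSg : Sg.PosSemidef)
    (Pt : Matrix (Fin n) (Fin n) ℝ) (K : Matrix (Fin m) (Fin n) ℝ)
    (hPt : Pt.PosDef)
    (hfeas : (Pt - Q - Kᵀ * R * K - (A + B * K)ᵀ * Pt * (A + B * K)).PosSemidef) :
    (Gᵀ * P * G * Sg).trace ≤ (Gᵀ * Pt * G * Sg).trace :=
  dare_solution_minimizes_trace_general A P Q B R hQ hR hP hOpt G Sg hSg Pt K hPt hfeas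
end

section
/- Suppose a nonnegative function V on a set X satisfies c₁|x|² ≤ V(x) ≤ c₂|x|² + Nδ for constants c₁, c₂ > 0, N ≥ 1, δ ≥ 0, and that along a process V_{k+1} ≤ V_k − c₁|x_k|² + δ (in expectation). Then E[V(x_{k+1})] ≤ λ E[V(x_k)] + (1 + N c₁/c₂) δ with λ := 1 − c₁/c₂ ∈ (0,1), and hence E[ℓ-type bounds] c₁ E[|x_k|²] ≤ λ^k (c₂|x_0|² + Nδ) + (1 + N c₁/c₂)δ/(1−λ) for all k. -/
/-! The decrease condition together with the upper bound `V ≤ c₂ s + N δ` gives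
`c₁ s ≥ (c₁ / c₂) (V - N δ)`, so `V` contracts by the factor `λ = 1 - c₁ / c₂` up to an additive
forcing term. Iterating this affine recursion bounds `V k` by `λ ^ k V 0` plus the fixed point of
the recursion, and the sandwich bounds turn this into a bound on `c₁ s k`. -/

section AffineRecursion

variable {K : Type*} [Field K] [LinearOrder K] [IsStrictOrderedRing K]

theorem le_pow_mul_add_div_one_sub_of_le_mul_add {u : ℕ → K} {a b : K}
    (ha₀ : 0 ≤ a) (ha₁ : a < 1) (hb : 0 ≤ b) (hu : ∀ k, u (k + 1) ≤ a * u k + b) (k : ℕ) :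
    u k ≤ a ^ k * u 0 + b / (1 - a) := by
  have hpos : 0 < 1 - a := sub_pos.2 ha₁
  have hfix : a * (b / (1 - a)) + b = b / (1 - a) := by
    field_simp
    ring
  induction k with
  | zero => simpa using div_nonneg hb hpos.le
  | succ k ih =>
    calc u (k + 1) ≤ a * u k + b := hu k
      _ ≤ a * (a ^ k * u 0 + b / (1 - a)) + b := by gcongr
      _ = a ^ (k + 1) * u 0 + (a * (b / (1 - a)) + b) := by ring
      _ = a ^ (k + 1) * u 0 + b / (1 - a) := by rw [hfix]

theorem le_one_sub_div_mul_add_of_le_of_le {v v' x c₁ c₂ m δ : K}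
    (hc₁ : 0 ≤ c₁) (hc₂ : 0 < c₂) (hup : v ≤ c₂ * x + m) (hdec : v' ≤ v - c₁ * x + δ) :
    v' ≤ (1 - c₁ / c₂) * v + (c₁ / c₂ * m + δ) := by
  have hx : (v - m) / c₂ ≤ x := by
    rw [div_le_iff₀ hc₂]
    linarith
  have hdrop : c₁ / c₂ * (v - m) ≤ c₁ * x :=
    calc c₁ / c₂ * (v - m) = c₁ * ((v - m) / c₂) := by ring
      _ ≤ c₁ * x := mul_le_mul_of_nonneg_left hx hc₁
  linarith

end AffineRecursion

theorem mean_squared_iss_bound_general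
    (V s : ℕ → ℝ) (c₁ c₂ N δ : ℝ)
    (hc₁ : 0 < c₁) (hc₂ : 0 < c₂) (hcc : c₁ < c₂) (hN : 1 ≤ N) (hδ : 0 ≤ δ)
    (hlow : ∀ k, c₁ * s k ≤ V k)
    (hup : ∀ k, V k ≤ c₂ * s k + N * δ)
    (hdec : ∀ k, V (k + 1) ≤ V k - c₁ * s k + δ) :
    (0 < 1 - c₁ / c₂ ∧ 1 - c₁ / c₂ < 1) ∧
    (∀ k, V (k + 1) ≤ (1 - c₁ / c₂) * V k + (1 + N * c₁ / c₂) * δ) ∧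
    (∀ k, c₁ * s k ≤ (1 - c₁ / c₂) ^ k * (c₂ * s 0 + N * δ)
        + (1 + N * c₁ / c₂) * δ / (1 - (1 - c₁ / c₂))) := by
  have hrate : 0 < 1 - c₁ / c₂ ∧ 1 - c₁ / c₂ < 1 :=
    ⟨sub_pos.2 ((div_lt_one hc₂).2 hcc), sub_lt_self _ (div_pos hc₁ hc₂)⟩
  have hstep : ∀ k, V (k + 1) ≤ (1 - c₁ / c₂) * V k + (1 + N * c₁ / c₂) * δ := fun k =>
    (le_one_sub_div_mul_add_of_le_of_le hc₁.le hc₂ (hup k) (hdec k)).trans_eq (by ring)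
  have hforcing : 0 ≤ (1 + N * c₁ / c₂) * δ := by
    have : 0 ≤ N * c₁ / c₂ := div_nonneg (mul_nonneg (by linarith) hc₁.le) hc₂.le
    exact mul_nonneg (by linarith) hδ
  refine ⟨hrate, hstep, fun k => ?_⟩
  calc c₁ * s k ≤ V k := hlow k
    _ ≤ (1 - c₁ / c₂) ^ k * V 0 + (1 + N * c₁ / c₂) * δ / (1 - (1 - c₁ / c₂)) :=
      le_pow_mul_add_div_one_sub_of_le_mul_add hrate.1.le hrate.2 hforcing hstep k
    _ ≤ _ := add_le_add_left (mul_le_mul_of_nonneg_left (hup 0) (pow_nonneg hrate.1.le k)) _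

/-- Abstract mean-squared ISS bound. With `V k = E[V(x_k)]` and `s k = E[|x_k|²]`: if
`c₁ s k ≤ V k ≤ c₂ s k + N δ` and `V (k+1) ≤ V k − c₁ s k + δ`, then
`V (k+1) ≤ λ V k + (1 + N c₁/c₂) δ` with `λ := 1 − c₁/c₂ ∈ (0,1)`, and hence
`c₁ s k ≤ λ^k (c₂ s 0 + N δ) + (1 + N c₁/c₂) δ/(1−λ)` for all `k`. -/
theorem mean_squared_iss_bound
    (V s : ℕ → ℝ) (c₁ c₂ N δ : ℝ)
    (hc₁ : 0 < c₁) (hc₂ : 0 < c₂) (hcc : c₁ < c₂) (hN : 1 ≤ N) (hδ : 0 ≤ δ)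
    (hs : ∀ k, 0 ≤ s k)
    (hlow : ∀ k, c₁ * s k ≤ V k)
    (hup : ∀ k, V k ≤ c₂ * s k + N * δ)
    (hdec : ∀ k, V (k + 1) ≤ V k - c₁ * s k + δ) :
    (0 < 1 - c₁ / c₂ ∧ 1 - c₁ / c₂ < 1) ∧
    (∀ k, V (k + 1) ≤ (1 - c₁ / c₂) * V k + (1 + N * c₁ / c₂) * δ) ∧
    (∀ k, c₁ * s k ≤ (1 - c₁ / c₂) ^ k * (c₂ * s 0 + N * δ)
        + (1 + N * c₁ / c₂) * δ / (1 - (1 - c₁ / c₂))) :=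
  mean_squared_iss_bound_general V s c₁ c₂ N δ hc₁ hc₂ hcc hN hδ hlow hup hdec
end

section
/- Let P, Q ⪰ 0 be symmetric with P − Q − K_fᵀRK_f ⪰ (A+BK_f)ᵀP(A+BK_f) for some K_f, R ⪰ 0. Let w be a zero-mean random vector with covariance Σ and x⁺ = (A+BK_f)x + Gw. Then E[V_f(x⁺)] − V_f(x) + ℓ(x, K_f x) ≤ tr(GᵀPGΣ), where V_f(x) = xᵀPx and ℓ(x,u) = xᵀQx + uᵀRu. -/
/-!
Expanding the quadratic form at `x⁺ = (A + B K_f) x + G w` gives a constant term, a term linear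
in `w` and the quadratic form of `GᵀPG` at `w`. The linear term has expectation zero because `w`
is centred, and the quadratic one has expectation `tr(GᵀPGΣ)`. What remains,
`(A + B K_f)x ⬝ P (A + B K_f)x − xᵀPx + ℓ(x, K_f x)`, is minus the quadratic form at `x` of the
positive semidefinite matrix `P − Q − K_fᵀRK_f − (A + B K_f)ᵀP(A + B K_f)`.
-/

open Matrix MeasureTheory

section QuadraticForm

variable {ι κ R : Type*} [Fintype ι] [Fintype κ] [CommSemiring R]

theorem Matrix.dotProduct_transpose_mul_mul_mulVec (P : Matrix ι ι R) (G : Matrix ι κ R)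
    (z : κ → R) : z ⬝ᵥ (Gᵀ * P * G) *ᵥ z = (G *ᵥ z) ⬝ᵥ P *ᵥ (G *ᵥ z) := by
  rw [← mulVec_mulVec, ← mulVec_mulVec, dotProduct_transpose_mulVec, dotProduct_comm]

theorem Matrix.add_mulVec_dotProduct_mulVec_add_mulVec (P : Matrix ι ι R) (G : Matrix ι κ R)
    (v : ι → R) (z : κ → R) :
    (v + G *ᵥ z) ⬝ᵥ P *ᵥ (v + G *ᵥ z)
      = v ⬝ᵥ P *ᵥ v + (Gᵀ *ᵥ ((P + Pᵀ) *ᵥ v)) ⬝ᵥ z + z ⬝ᵥ (Gᵀ * P * G) *ᵥ z := by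
  have h₁ : (Gᵀ *ᵥ (P *ᵥ v)) ⬝ᵥ z = (G *ᵥ z) ⬝ᵥ P *ᵥ v := by
    rw [dotProduct_comm, dotProduct_transpose_mulVec, dotProduct_comm]
  have h₂ : (Gᵀ *ᵥ (Pᵀ *ᵥ v)) ⬝ᵥ z = v ⬝ᵥ P *ᵥ (G *ᵥ z) := by
    rw [dotProduct_comm, dotProduct_transpose_mulVec, dotProduct_comm, dotProduct_transpose_mulVec]
  rw [dotProduct_transpose_mul_mul_mulVec]
  simp only [add_mulVec, mulVec_add, dotProduct_add, add_dotProduct, h₁, h₂]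
  abel

theorem Matrix.dotProduct_mulVec_eq_sum (M : Matrix ι ι R) (z : ι → R) :
    z ⬝ᵥ M *ᵥ z = ∑ i, ∑ j, M i j * (z j * z i) := by
  simp only [dotProduct, mulVec, Finset.mul_sum]
  exact Finset.sum_congr rfl fun i _ => Finset.sum_congr rfl fun j _ => by ring

end QuadraticForm

section Expectation

variable {ι κ Ω : Type*} [Fintype ι] [Fintype κ] [MeasurableSpace Ω] {μ : Measure Ω}

theorem integrable_dotProduct (a : ι → ℝ) {z : Ω → ι → ℝ}
    (hint : ∀ i, Integrable (fun ω => z ω i) μ) : Integrable (fun ω => a ⬝ᵥ z ω) μ :=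
  integrable_finsetSum _ fun i _ => (hint i).const_mul (a i)

theorem integrable_dotProduct_mulVec (M : Matrix ι ι ℝ) {z : Ω → ι → ℝ}
    (hint : ∀ i j, Integrable (fun ω => z ω i * z ω j) μ) :
    Integrable (fun ω => z ω ⬝ᵥ M *ᵥ z ω) μ := by
  simp only [dotProduct_mulVec_eq_sum]
  exact integrable_finsetSum _ fun i _ =>
    integrable_finsetSum _ fun j _ => (hint j i).const_mul (M i j)

theorem integral_dotProduct_eq_zero (a : ι → ℝ) {z : Ω → ι → ℝ}
    (hint : ∀ i, Integrable (fun ω => z ω i) μ) (hmean : ∀ i, ∫ ω, z ω i ∂μ = 0) :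
    ∫ ω, a ⬝ᵥ z ω ∂μ = 0 := by
  simp only [dotProduct]
  rw [integral_finsetSum _ fun i _ => (hint i).const_mul (a i)]
  simp [integral_const_mul, hmean]

theorem integral_dotProduct_mulVec (M S : Matrix ι ι ℝ) {z : Ω → ι → ℝ}
    (hint : ∀ i j, Integrable (fun ω => z ω i * z ω j) μ)
    (hS : ∀ i j, S i j = ∫ ω, z ω i * z ω j ∂μ) :
    ∫ ω, z ω ⬝ᵥ M *ᵥ z ω ∂μ = (M * S).trace := by
  simp only [dotProduct_mulVec_eq_sum, trace, diag, mul_apply, hS]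
  rw [integral_finsetSum _ fun i _ =>
    integrable_finsetSum _ fun j _ => (hint j i).const_mul (M i j)]
  refine Finset.sum_congr rfl fun i _ => ?_
  rw [integral_finsetSum _ fun j _ => (hint j i).const_mul (M i j)]
  simp only [integral_const_mul]

theorem integral_add_mulVec_dotProduct_mulVec_add_mulVec [IsProbabilityMeasure μ]
    (P : Matrix ι ι ℝ) (G : Matrix ι κ ℝ) (S : Matrix κ κ ℝ) (v : ι → ℝ) {w : Ω → κ → ℝ}
    (hint₁ : ∀ i, Integrable (fun ω => w ω i) μ)
    (hint₂ : ∀ i j, Integrable (fun ω => w ω i * w ω j) μ)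
    (hmean : ∀ i, ∫ ω, w ω i ∂μ = 0) (hS : ∀ i j, S i j = ∫ ω, w ω i * w ω j ∂μ) :
    ∫ ω, (v + G *ᵥ w ω) ⬝ᵥ P *ᵥ (v + G *ᵥ w ω) ∂μ = v ⬝ᵥ P *ᵥ v + (Gᵀ * P * G * S).trace := by
  simp only [add_mulVec_dotProduct_mulVec_add_mulVec]
  rw [integral_add ?_ (integrable_dotProduct_mulVec _ hint₂),
    integral_add (integrable_const _) (integrable_dotProduct _ hint₁), integral_const,
    probReal_univ, one_smul, integral_dotProduct_eq_zero _ hint₁ hmean,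
    integral_dotProduct_mulVec _ _ hint₂ hS, add_zero]
  exact (integrable_const _).add (integrable_dotProduct _ hint₁)

end Expectation

theorem Matrix.PosSemidef.dotProduct_mulVec_add_le {ι κ : Type*} [Fintype ι] [Fintype κ]
    {P Q F : Matrix ι ι ℝ} {R : Matrix κ κ ℝ} {K : Matrix κ ι ℝ}
    (h : (P - Q - Kᵀ * R * K - Fᵀ * P * F).PosSemidef) (x : ι → ℝ) :
    (F *ᵥ x) ⬝ᵥ P *ᵥ (F *ᵥ x) + x ⬝ᵥ Q *ᵥ x + (K *ᵥ x) ⬝ᵥ R *ᵥ (K *ᵥ x) ≤ x ⬝ᵥ P *ᵥ x := by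
  have h := h.dotProduct_mulVec_nonneg x
  simp only [sub_mulVec, dotProduct_sub, star_trivial,
    dotProduct_transpose_mul_mul_mulVec] at h
  linarith

theorem terminal_cost_decrease_general
    {n m q : ℕ} {Ω : Type*} [MeasurableSpace Ω]
    (μ : Measure Ω) [IsProbabilityMeasure μ]
    (A P Q : Matrix (Fin n) (Fin n) ℝ)
    (B : Matrix (Fin n) (Fin m) ℝ)
    (R : Matrix (Fin m) (Fin m) ℝ)
    (G : Matrix (Fin n) (Fin q) ℝ)
    (Kf : Matrix (Fin m) (Fin n) ℝ)
    (hterm : (P - Q - Kfᵀ * R * Kf - (A + B * Kf)ᵀ * P * (A + B * Kf)).PosSemidef)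
    (w : Ω → Fin q → ℝ)
    (hint1 : ∀ i, Integrable (fun ω => w ω i) μ)
    (hint2 : ∀ i j, Integrable (fun ω => w ω i * w ω j) μ)
    (hmean : ∀ i, (∫ ω, w ω i ∂μ) = 0)
    (Sg : Matrix (Fin q) (Fin q) ℝ)
    (hSg : ∀ i j, Sg i j = ∫ ω, w ω i * w ω j ∂μ)
    (x : Fin n → ℝ) :
    (∫ ω, ((A + B * Kf).mulVec x + G.mulVec (w ω)) ⬝ᵥ
        P.mulVec ((A + B * Kf).mulVec x + G.mulVec (w ω)) ∂μ)
      - x ⬝ᵥ P.mulVec x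
      + (x ⬝ᵥ Q.mulVec x + (Kf.mulVec x) ⬝ᵥ R.mulVec (Kf.mulVec x))
      ≤ (Gᵀ * P * G * Sg).trace := by
  rw [integral_add_mulVec_dotProduct_mulVec_add_mulVec P G Sg _ hint1 hint2 hmean hSg]
  linarith [hterm.dotProduct_mulVec_add_le x]

/-- One-step expected cost-decrease inequality for the terminal control law: if
`P − Q − K_fᵀRK_f ⪰ (A+BK_f)ᵀP(A+BK_f)` (with `P, Q, R ⪰ 0`), `w` is a zero-mean random
vector with covariance `Σ`, and `x⁺ = (A+BK_f)x + Gw`, then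
`E[V_f(x⁺)] − V_f(x) + ℓ(x, K_f x) ≤ tr(GᵀPGΣ)`, where `V_f(y) = yᵀPy` and
`ℓ(x,u) = xᵀQx + uᵀRu`. -/
theorem terminal_cost_decrease
    {n m q : ℕ} {Ω : Type*} [MeasurableSpace Ω]
    (μ : Measure Ω) [IsProbabilityMeasure μ]
    (A P Q : Matrix (Fin n) (Fin n) ℝ)
    (B : Matrix (Fin n) (Fin m) ℝ)
    (R : Matrix (Fin m) (Fin m) ℝ)
    (G : Matrix (Fin n) (Fin q) ℝ)
    (Kf : Matrix (Fin m) (Fin n) ℝ)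
    (hP : P.PosSemidef) (hQ : Q.PosSemidef) (hR : R.PosSemidef)
    (hterm : (P - Q - Kfᵀ * R * Kf - (A + B * Kf)ᵀ * P * (A + B * Kf)).PosSemidef)
    (w : Ω → Fin q → ℝ)
    (hmeas : ∀ i, Measurable fun ω => w ω i)
    (hint1 : ∀ i, Integrable (fun ω => w ω i) μ)
    (hint2 : ∀ i j, Integrable (fun ω => w ω i * w ω j) μ)
    (hmean : ∀ i, (∫ ω, w ω i ∂μ) = 0)
    (Sg : Matrix (Fin q) (Fin q) ℝ)
    (hSg : ∀ i j, Sg i j = ∫ ω, w ω i * w ω j ∂μ)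
    (x : Fin n → ℝ) :
    (∫ ω, ((A + B * Kf).mulVec x + G.mulVec (w ω)) ⬝ᵥ
        P.mulVec ((A + B * Kf).mulVec x + G.mulVec (w ω)) ∂μ)
      - x ⬝ᵥ P.mulVec x
      + (x ⬝ᵥ Q.mulVec x + (Kf.mulVec x) ⬝ᵥ R.mulVec (Kf.mulVec x))
      ≤ (Gᵀ * P * G * Sg).trace :=
  terminal_cost_decrease_general μ A P Q B R G Kf hterm w hint1 hint2 hmean Sg hSg x
end
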